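/- Characterization of the values of type ♯𝔹→♯𝔹: a closed λ-abstraction λx.t⃗ is a value of type ♯𝔹→♯𝔹 (i.e., λx.t⃗ ∈ ⟦♯𝔹→♯𝔹⟧) if and only if it represents a unitary operator F : ℂ² → ℂ². -/

import Mathlib

namespace LinAlg

/-! ### Syntax: pure values, pure terms, term distributions -/

mutual
inductive Val : Type where
  | var : ℕ → Val
  | lam : ℕ → Distr → Val
  | star : Val
  | pair : Val → Val → Val
  | inl : Val → Val
  | inr : Val → Val
inductive Term : Type where
  | val : Val → Term
  | app : Term → Term → Term
  | seq : Term → Distr → Term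
  | letp : ℕ → ℕ → Term → Distr → Term
  | matc : Term → ℕ → Distr → ℕ → Distr → Term
inductive Distr : Type where
  | zero : Distr
  | single : Term → Distr
  | add : Distr → Distr → Distr
  | smul : ℂ → Distr → Distr
end

noncomputable instance : DecidableEq Val := fun _ _ => Classical.dec _
noncomputable instance : DecidableEq Term := fun _ _ => Classical.dec _
noncomputable instance : DecidableEq Distr := fun _ _ => Classical.dec _

/-! ### The shallow congruence ≡ on term distributions -/

inductive Cong : Distr → Distr → Prop where
  | addZero (d : Distr) : Cong (d.add .zero) d
  | oneSmul (d : Distr) : Cong (Distr.smul 1 d) d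
  | smulSmul (a b : ℂ) (d : Distr) : Cong (Distr.smul a (Distr.smul b d)) (Distr.smul (a * b) d)
  | addComm (d₁ d₂ : Distr) : Cong (d₁.add d₂) (d₂.add d₁)
  | addAssoc (d₁ d₂ d₃ : Distr) : Cong ((d₁.add d₂).add d₃) (d₁.add (d₂.add d₃))
  | smulDistrib (a b : ℂ) (d : Distr) : Cong (Distr.smul (a + b) d) ((Distr.smul a d).add (Distr.smul b d))
  | smulAdd (a : ℂ) (d₁ d₂ : Distr) : Cong (Distr.smul a (d₁.add d₂)) ((Distr.smul a d₁).add (Distr.smul a d₂))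
  | refl (d : Distr) : Cong d d
  | symm {d₁ d₂ : Distr} : Cong d₁ d₂ → Cong d₂ d₁
  | trans {d₁ d₂ d₃ : Distr} : Cong d₁ d₂ → Cong d₂ d₃ → Cong d₁ d₃
  | addCongr {d₁ d₁' d₂ d₂' : Distr} : Cong d₁ d₁' → Cong d₂ d₂' → Cong (d₁.add d₂) (d₁'.add d₂')
  | smulCongr (a : ℂ) {d d' : Distr} : Cong d d' → Cong (Distr.smul a d) (Distr.smul a d')

/-! ### Free variables -/

mutual
def fvV : Val → Finset ℕ
  | .var y => {y}
  | .lam y b => fvD b \ {y}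
  | .star => ∅
  | .pair v₁ v₂ => fvV v₁ ∪ fvV v₂
  | .inl v => fvV v
  | .inr v => fvV v
def fvT : Term → Finset ℕ
  | .val v => fvV v
  | .app s t => fvT s ∪ fvT t
  | .seq t s => fvT t ∪ fvD s
  | .letp y z t s => fvT t ∪ (fvD s \ {y, z})
  | .matc t y s₁ z s₂ => fvT t ∪ (fvD s₁ \ {y}) ∪ (fvD s₂ \ {z})
def fvD : Distr → Finset ℕ
  | .zero => ∅
  | .single t => fvT t
  | .add d₁ d₂ => fvD d₁ ∪ fvD d₂
  | .smul _ d => fvD d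
end

/-! ### Pure substitution -/

mutual
def substV (x : ℕ) (w : Val) : Val → Val
  | .var y => if y = x then w else .var y
  | .lam y b => if y = x then .lam y b else .lam y (substD x w b)
  | .star => .star
  | .pair v₁ v₂ => .pair (substV x w v₁) (substV x w v₂)
  | .inl v => .inl (substV x w v)
  | .inr v => .inr (substV x w v)
def substT (x : ℕ) (w : Val) : Term → Term
  | .val v => .val (substV x w v)
  | .app s t => .app (substT x w s) (substT x w t)
  | .seq t s => .seq (substT x w t) (substD x w s)
  | .letp y z t s =>
      .letp y z (substT x w t) (if y = x ∨ z = x then s else substD x w s)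
  | .matc t y s₁ z s₂ =>
      .matc (substT x w t) y (if y = x then s₁ else substD x w s₁)
        z (if z = x then s₂ else substD x w s₂)
def substD (x : ℕ) (w : Val) : Distr → Distr
  | .zero => .zero
  | .single t => .single (substT x w t)
  | .add d₁ d₂ => .add (substD x w d₁) (substD x w d₂)
  | .smul a d => .smul a (substD x w d)
end

/-! ### Linear extensions of the syntactic constructs -/

def appTD (s : Term) : Distr → Distr
  | .zero => .zero
  | .single t => .single (.app s t)
  | .add d₁ d₂ => .add (appTD s d₁) (appTD s d₂)
  | .smul a d => .smul a (appTD s d)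

def appDV : Distr → Val → Distr
  | .zero, _ => .zero
  | .single t, v => .single (.app t (.val v))
  | .add d₁ d₂, v => .add (appDV d₁ v) (appDV d₂ v)
  | .smul a d, v => .smul a (appDV d v)

def seqD : Distr → Distr → Distr
  | .zero, _ => .zero
  | .single t, s => .single (.seq t s)
  | .add d₁ d₂, s => .add (seqD d₁ s) (seqD d₂ s)
  | .smul a d, s => .smul a (seqD d s)

def letpD (x y : ℕ) : Distr → Distr → Distr
  | .zero, _ => .zero
  | .single t, s => .single (.letp x y t s)
  | .add d₁ d₂, s => .add (letpD x y d₁ s) (letpD x y d₂ s)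
  | .smul a d, s => .smul a (letpD x y d s)

def matcD : Distr → ℕ → Distr → ℕ → Distr → Distr
  | .zero, _, _, _, _ => .zero
  | .single t, y, s₁, z, s₂ => .single (.matc t y s₁ z s₂)
  | .add d₁ d₂, y, s₁, z, s₂ => .add (matcD d₁ y s₁ z s₂) (matcD d₂ y s₁ z s₂)
  | .smul a d, y, s₁, z, s₂ => .smul a (matcD d y s₁ z s₂)

/-- Bilinear application of distributions:  (Σᵢ αᵢ·tᵢ)(Σⱼ βⱼ·sⱼ) = Σᵢⱼ αᵢβⱼ·(tᵢ sⱼ). -/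
def appD : Distr → Distr → Distr
  | .zero, _ => .zero
  | .single t, w => appTD t w
  | .add d₁ d₂, w => .add (appD d₁ w) (appD d₂ w)
  | .smul a d, w => .smul a (appD d w)

/-- Bilinear substitution  d⟨x := w⃗⟩ = Σⱼ βⱼ · d[x := wⱼ]  (recursion on the value
distribution w⃗; non-value summands are junk and are sent to 0⃗). -/
def bsubst (x : ℕ) (d : Distr) : Distr → Distr
  | .zero => .zero
  | .single (.val w) => substD x w d
  | .single _ => .zero
  | .add w₁ w₂ => .add (bsubst x d w₁) (bsubst x d w₂)
  | .smul a w => .smul a (bsubst x d w)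

/-! ### Evaluation -/

inductive Atom : Term → Distr → Prop where
  | beta (x : ℕ) (b : Distr) (v : Val) :
      Atom (.app (.val (.lam x b)) (.val v)) (substD x v b)
  | seqStar (s : Distr) : Atom (.seq (.val .star) s) s
  | letPair (x y : ℕ) (v w : Val) (s : Distr) :
      Atom (.letp x y (.val (.pair v w)) s) (substD y w (substD x v s))
  | matchInl (v : Val) (y : ℕ) (s₁ : Distr) (z : ℕ) (s₂ : Distr) :
      Atom (.matc (.val (.inl v)) y s₁ z s₂) (substD y v s₁)
  | matchInr (v : Val) (y : ℕ) (s₁ : Distr) (z : ℕ) (s₂ : Distr) :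
      Atom (.matc (.val (.inr v)) y s₁ z s₂) (substD z v s₂)
  | appR (s : Term) {t : Term} {d : Distr} : Atom t d → Atom (.app s t) (appTD s d)
  | appL (v : Val) {t : Term} {d : Distr} : Atom t d → Atom (.app t (.val v)) (appDV d v)
  | seqC (s : Distr) {t : Term} {d : Distr} : Atom t d → Atom (.seq t s) (seqD d s)
  | letC (x y : ℕ) (s : Distr) {t : Term} {d : Distr} :
      Atom t d → Atom (.letp x y t s) (letpD x y d s)
  | matcC (y : ℕ) (s₁ : Distr) (z : ℕ) (s₂ : Distr) {t : Term} {d : Distr} :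
      Atom t d → Atom (.matc t y s₁ z s₂) (matcD d y s₁ z s₂)

/-- One-step evaluation:  t⃗ ≻ t⃗′. -/
def Step (d d' : Distr) : Prop :=
  ∃ (a : ℂ) (s : Term) (s' r : Distr),
    Cong d (Distr.add (.smul a (.single s)) r) ∧
    Cong d' (Distr.add (.smul a s') r) ∧ Atom s s'

/-- Evaluation  t⃗ ≻≻ t⃗′:  reflexive-transitive closure of one-step evaluation. -/
def Eval : Distr → Distr → Prop := Relation.ReflTransGen Step

/-! ### Value distributions, inner product, norm -/

def IsValT : Term → Prop
  | .val _ => True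
  | _ => False

def IsValD : Distr → Prop
  | .zero => True
  | .single t => IsValT t
  | .add d₁ d₂ => IsValD d₁ ∧ IsValD d₂
  | .smul _ d => IsValD d

/-- The set of closed value distributions. -/
def ClosedValD : Set Distr := {d | IsValD d ∧ fvD d = ∅}

/-- Total coefficient of the pure term `t` in the distribution `d`. -/
noncomputable def coeff : Distr → Term → ℂ
  | .zero, _ => 0
  | .single s, t => if s = t then 1 else 0
  | .add d₁ d₂, t => coeff d₁ t + coeff d₂ t
  | .smul a d, t => a * coeff d t

/-- The domain of a distribution (all pure terms occurring in it, even with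
coefficient 0). -/
noncomputable def domD : Distr → Finset Term
  | .zero => ∅
  | .single t => {t}
  | .add d₁ d₂ => domD d₁ ∪ domD d₂
  | .smul _ d => domD d

/-- The inner product ⟨v⃗|w⃗⟩ on value distributions. -/
noncomputable def innerD (v w : Distr) : ℂ :=
  ∑ t ∈ domD v, (starRingEnd ℂ) (coeff v t) * coeff w t

/-- The pseudo-ℓ²-norm ‖v⃗‖. -/
noncomputable def normD (v : Distr) : ℝ := Real.sqrt (innerD v v).re

/-- The unit sphere S of closed value distributions of norm 1. -/
def Sphere : Set Distr := {d | d ∈ ClosedValD ∧ normD d = 1}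

/-- Span(X): weak linear combinations of elements of X (taken modulo ≡). -/
inductive Span (X : Set Distr) : Distr → Prop where
  | mem {d : Distr} : d ∈ X → Span X d
  | zero : Span X .zero
  | add {d₁ d₂ : Distr} : Span X d₁ → Span X d₂ → Span X (d₁.add d₂)
  | smul (a : ℂ) {d : Distr} : Span X d → Span X (Distr.smul a d)
  | congr {d d' : Distr} : Span X d → Cong d d' → Span X d'

/-! ### Realizability: unitary types -/

/-- t⃗ ⊩ A :  t⃗ evaluates to some vector of ⟦A⟧. -/
def Realizes (A : Set Distr) (t : Distr) : Prop := ∃ v ∈ A, Eval t v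

/-- |A| : the set of (closed) realizers of A. -/
def realizersOf (A : Set Distr) : Set Distr := {t | fvD t = ∅ ∧ Realizes A t}

/-! ### Type constructors -/

def UnitT : Set Distr := {Distr.single (.val .star)}

/-- ♭A : the basis of A. -/
def flatT (X : Set Distr) : Set Distr :=
  {e | ∃ d ∈ X, ∃ v : Val, (Term.val v) ∈ domD d ∧ e = Distr.single (.val v)}

/-- ♯A : the unitary span of A. -/
def sharpT (X : Set Distr) : Set Distr := {d | Span X d ∧ d ∈ Sphere}

/-- Linear extension of a value constructor. -/
def mapVD (f : Val → Val) : Distr → Distr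
  | .zero => .zero
  | .single (.val v) => .single (.val (f v))
  | .single t => .single t
  | .add d₁ d₂ => .add (mapVD f d₁) (mapVD f d₂)
  | .smul a d => .smul a (mapVD f d)

def inlD : Distr → Distr := mapVD Val.inl
def inrD : Distr → Distr := mapVD Val.inr

/-- Bilinear extension of pairing. -/
def pairD : Distr → Distr → Distr
  | .zero, _ => .zero
  | .single (.val v), w => mapVD (Val.pair v) w
  | .single t, _ => .single t
  | .add d₁ d₂, w => .add (pairD d₁ w) (pairD d₂ w)
  | .smul a d, w => .smul a (pairD d w)

/-- A + B (simple sum). -/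
def plusT (A B : Set Distr) : Set Distr :=
  {d | (∃ v ∈ A, d = inlD v) ∨ (∃ w ∈ B, d = inrD w)}

/-- A × B (simple product). -/
def timesT (A B : Set Distr) : Set Distr :=
  {d | ∃ v ∈ A, ∃ w ∈ B, d = pairD v w}

/-- A → B (pure arrow). -/
def arrowT (A B : Set Distr) : Set Distr :=
  {d | ∃ (x : ℕ) (b : Distr), d = Distr.single (.val (.lam x b)) ∧ fvD d = ∅ ∧
      ∀ v ∈ A, Realizes B (bsubst x b v)}

/-- Σᵢ αᵢ · λx.t⃗ᵢ  ↦  Σᵢ αᵢ · t⃗ᵢ  (strips the λx in front of each summand). -/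
def stripLam (x : ℕ) : Distr → Distr
  | .zero => .zero
  | .single (.val (.lam y b)) => if y = x then b else .single (.val (.lam y b))
  | .single t => .single t
  | .add d₁ d₂ => .add (stripLam x d₁) (stripLam x d₂)
  | .smul a d => .smul a (stripLam x d)

/-- A ⇒ B (unitary arrow). -/
def uarrowT (A B : Set Distr) : Set Distr :=
  {d | d ∈ Sphere ∧ ∃ x : ℕ,
      (∀ t ∈ domD d, ∃ b : Distr, t = Term.val (.lam x b)) ∧
      ∀ v ∈ A, Realizes B (bsubst x (stripLam x d) v)}

/-! ### Booleans -/

def ttD : Distr := .single (.val (.inl .star))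
def ffD : Distr := .single (.val (.inr .star))

/-- 𝔹 = 𝕌 + 𝕌. -/
def BoolT : Set Distr := plusT UnitT UnitT

/-- ♯𝔹, the type of unitary Booleans. -/
def sharpBool : Set Distr := sharpT BoolT

/-- Boolean projection π : Span({tt,ff}) → ℂ². -/
noncomputable def piB (d : Distr) : ℂ × ℂ :=
  (coeff d (.val (.inl .star)), coeff d (.val (.inr .star)))

/-- t⃗ represents the operator F : ℂ² → ℂ². -/
def Represents (td : Distr) (F : ℂ × ℂ → ℂ × ℂ) : Prop :=
  ∀ v, Span BoolT v → ∃ w, Span BoolT w ∧ Eval (appD td v) w ∧ piB w = F (piB v)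

/-- Hermitian inner product on ℂ². -/
def hinner (u v : ℂ × ℂ) : ℂ :=
  (starRingEnd ℂ) u.1 * v.1 + (starRingEnd ℂ) u.2 * v.2

/-- A unitary operator on ℂ². -/
def IsUnitaryOp (F : ℂ × ℂ → ℂ × ℂ) : Prop :=
  ∀ u v : ℂ × ℂ, hinner (F u) (F v) = hinner u v

/-! ### Typing contexts, substitutions, judgments -/

abbrev Ctx := List (ℕ × Set Distr)
abbrev Subst := List (ℕ × Distr)

/-- Applying a substitution, one bilinear substitution at a time. -/
def applySub : Distr → Subst → Distr
  | d, [] => d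
  | d, (x, w) :: σ => applySub (bsubst x d w) σ

/-- σ ∈ ⟦Γ⟧. -/
def SubMem (σ : Subst) (Γ : Ctx) : Prop :=
  List.Forall₂ (fun p q => p.1 = q.1 ∧ p.2 ∈ q.2) σ Γ

def ctxDom (Γ : Ctx) : Set ℕ := {x | ∃ A, (x, A) ∈ Γ}

/-- dom♯(Γ): the variables of Γ whose type is not a pure-value type. -/
def ctxDomSharp (Γ : Ctx) : Set ℕ := {x | ∃ A, (x, A) ∈ Γ ∧ flatT A ≠ A}

/-- All the types of the context are unitary types (subsets of the sphere). -/
def CtxUnitary (Γ : Ctx) : Prop := ∀ p ∈ Γ, p.2 ⊆ Sphere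

/-- Validity of the typing judgment  Γ ⊢ t⃗ : A. -/
def ValidJ (Γ : Ctx) (t : Distr) (A : Set Distr) : Prop :=
  ctxDomSharp Γ ⊆ (fvD t : Set ℕ) ∧ (fvD t : Set ℕ) ⊆ ctxDom Γ ∧
  ∀ σ : Subst, SubMem σ Γ → Realizes A (applySub t σ)

/-- Validity of the orthogonality judgment  Γ | Δ₁ ⊢ t⃗₁ ⊥ Δ₂ ⊢ t⃗₂ : A. -/
def OrthoJ (Γ Δ₁ Δ₂ : Ctx) (t₁ t₂ : Distr) (A : Set Distr) : Prop :=
  ValidJ (Γ ++ Δ₁) t₁ A ∧ ValidJ (Γ ++ Δ₂) t₂ A ∧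
  ∀ σ σ₁ σ₂ : Subst, SubMem σ Γ → SubMem σ₁ Δ₁ → SubMem σ₂ Δ₂ →
    ∀ v₁ v₂ : Distr, v₁ ∈ ClosedValD → v₂ ∈ ClosedValD →
      Eval (applySub t₁ (σ ++ σ₁)) v₁ → Eval (applySub t₂ (σ ++ σ₂)) v₂ →
      innerD v₁ v₂ = 0

end LinAlg

namespace LinAlg

/-!
Evaluation is linear and, by the Z-property of full development, confluent up to `≡`; value
distributions are normal forms. Hence `λx.b⃗` acts on Boolean distributions as the linear map `F`
whose columns are `π(w⃗_tt)` and `π(w⃗_ff)`, where `w⃗_tt`, `w⃗_ff` are the results of `b⃗[x:=tt]` and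
`b⃗[x:=ff]`. If `λx.b⃗ : ♯𝔹 → ♯𝔹`, then `F` maps unit vectors to unit vectors; testing `(1,0)`,
`(0,1)`, `(1,1)/√2` and `(1,i)/√2` shows that its columns are orthonormal, so `F` is unitary.
Conversely, if `λx.b⃗` represents a unitary `F`, then `(λx.b⃗) v⃗` reaches a unit Boolean for every
`v⃗ ∈ ♯𝔹`, and by confluence so does `b⃗⟨x:=v⃗⟩`.
-/

/-- Induction on `Distr` alone (the `induction` tactic rejects the mutual family). -/
theorem Distr.ind {motive : Distr → Prop} (hz : motive .zero) (hs : ∀ t, motive (.single t))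
    (ha : ∀ d e, motive d → motive e → motive (.add d e))
    (hm : ∀ a d, motive d → motive (.smul a d)) : ∀ d, motive d := fun d =>
  Distr.rec (motive_1 := fun _ => True) (motive_2 := fun _ => True) (motive_3 := motive)
    (fun _ => trivial) (fun _ _ _ => trivial) trivial (fun _ _ _ _ => trivial)
    (fun _ _ => trivial) (fun _ _ => trivial) (fun _ _ => trivial)
    (fun _ _ _ _ => trivial) (fun _ _ _ _ => trivial) (fun _ _ _ _ _ _ => trivial)
    (fun _ _ _ _ _ _ _ _ => trivial) hz (fun t _ => hs t) ha hm d

namespace Cong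

theorem map {f : Distr → Distr} (h0 : f .zero = .zero)
    (hadd : ∀ d e, f (d.add e) = (f d).add (f e)) (hsmul : ∀ a d, f (.smul a d) = .smul a (f d))
    {d e : Distr} (h : Cong d e) : Cong (f d) (f e) := by
  induction h with
  | addZero d => rw [hadd, h0]; exact .addZero _
  | oneSmul d => rw [hsmul]; exact .oneSmul _
  | smulSmul a b d => rw [hsmul, hsmul, hsmul]; exact .smulSmul _ _ _
  | addComm d₁ d₂ => rw [hadd, hadd]; exact .addComm _ _
  | addAssoc d₁ d₂ d₃ => simp only [hadd]; exact .addAssoc _ _ _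
  | smulDistrib a b d => simp only [hadd, hsmul]; exact .smulDistrib _ _ _
  | smulAdd a d₁ d₂ => simp only [hadd, hsmul]; exact .smulAdd _ _ _
  | refl d => exact .refl _
  | symm _ ih => exact ih.symm
  | trans _ _ ih₁ ih₂ => exact ih₁.trans ih₂
  | addCongr _ _ ih₁ ih₂ => rw [hadd, hadd]; exact ih₁.addCongr ih₂
  | smulCongr a _ ih => rw [hsmul, hsmul]; exact ih.smulCongr a

theorem bsubst (x : ℕ) (b : Distr) {d e : Distr} (h : Cong d e) :
    Cong (LinAlg.bsubst x b d) (LinAlg.bsubst x b e) :=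
  h.map rfl (fun _ _ => rfl) (fun _ _ => rfl)

theorem coeff_eq {d e : Distr} (h : Cong d e) (t : Term) : coeff d t = coeff e t := by
  induction h <;> simp_all [coeff] <;> ring

theorem domD_eq {d e : Distr} (h : Cong d e) : domD d = domD e := by
  induction h with
  | addComm d₁ d₂ => simp [domD, Finset.union_comm]
  | addAssoc d₁ d₂ d₃ => simp [domD, Finset.union_assoc]
  | symm _ ih => exact ih.symm
  | trans _ _ ih₁ ih₂ => exact ih₁.trans ih₂
  | addCongr _ _ ih₁ ih₂ => simp [domD, ih₁, ih₂]
  | _ => simp_all [domD]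

theorem piB_eq {d e : Distr} (h : Cong d e) : piB d = piB e := by
  simp [piB, h.coeff_eq]

end Cong

theorem coeff_eq_zero_of_notMem_domD {t : Term} {d : Distr} (h : t ∉ domD d) :
    coeff d t = 0 := by
  induction d using Distr.ind with
  | hz => rfl
  | hs s => simp only [domD, Finset.mem_singleton] at h; simp [coeff, Ne.symm h]
  | ha d e ihd ihe =>
    simp only [domD, Finset.mem_union, not_or] at h; simp [coeff, ihd h.1, ihe h.2]
  | hm a d ih => simp [coeff, ih h]

/-! ### Evaluation -/

namespace Step

theorem of_atom {s : Term} {s' : Distr} (h : Atom s s') : Step (.single s) s' :=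
  have unit (u : Distr) : Cong ((Distr.smul 1 u).add .zero) u :=
    (Cong.addZero _).trans (Cong.oneSmul _)
  ⟨1, s, s', .zero, (unit _).symm, (unit _).symm, h⟩

theorem congr_left {c d d' : Distr} (hc : Cong c d) (h : Step d d') : Step c d' := by
  obtain ⟨a, s, s', r, h1, h2, hA⟩ := h
  exact ⟨a, s, s', r, hc.trans h1, h2, hA⟩

theorem congr_right {d d' e : Distr} (h : Step d d') (hc : Cong d' e) : Step d e := by
  obtain ⟨a, s, s', r, h1, h2, hA⟩ := h
  exact ⟨a, s, s', r, h1, hc.symm.trans h2, hA⟩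

theorem add_left {d d' : Distr} (e : Distr) (h : Step d d') : Step (d.add e) (d'.add e) := by
  obtain ⟨a, s, s', r, h1, h2, hA⟩ := h
  exact ⟨a, s, s', r.add e, (h1.addCongr (.refl e)).trans (.addAssoc _ _ _),
    (h2.addCongr (.refl e)).trans (.addAssoc _ _ _), hA⟩

theorem add_right (d : Distr) {e e' : Distr} (h : Step e e') : Step (d.add e) (d.add e') :=
  congr_left (.addComm _ _) ((h.add_left d).congr_right (.addComm _ _))

theorem smul (α : ℂ) {d d' : Distr} (h : Step d d') : Step (.smul α d) (.smul α d') := by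
  obtain ⟨a, s, s', r, h1, h2, hA⟩ := h
  have distrib : ∀ {e} (u : Distr), Cong e ((Distr.smul a u).add r) →
      Cong (.smul α e) ((Distr.smul (α * a) u).add (.smul α r)) := fun u hu =>
    (hu.smulCongr α).trans ((Cong.smulAdd α _ _).trans ((Cong.smulSmul α a u).addCongr (.refl _)))
  exact ⟨α * a, s, s', .smul α r, distrib _ h1, distrib _ h2, hA⟩

end Step

namespace Eval

theorem add {d d' e e' : Distr} (h₁ : Eval d d') (h₂ : Eval e e') :
    Eval (d.add e) (d'.add e') :=
  Relation.ReflTransGen.trans (h₁.lift (fun z => z.add e) fun _ _ h => h.add_left e)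
    (h₂.lift (fun z => Distr.add d' z) fun _ _ h => h.add_right d')

theorem smul (α : ℂ) {d d' : Distr} (h : Eval d d') : Eval (.smul α d) (.smul α d') :=
  h.lift (fun z => Distr.smul α z) fun _ _ h => h.smul α

theorem exists_of_cong {u u' v : Distr} (hc : Cong u u') (he : Eval u' v) :
    ∃ v', Eval u v' ∧ Cong v' v := by
  rcases he.cases_head with rfl | ⟨c, hs, hev⟩
  · exact ⟨u, .refl, hc⟩
  · exact ⟨v, .head (hs.congr_left hc) hev, .refl v⟩

end Eval

theorem Atom.not_val {v : Val} {e : Distr} (h : Atom (.val v) e) : False := by cases h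

theorem Atom.unique {t : Term} {d d' : Distr} (h : Atom t d) (h' : Atom t d') : d = d' := by
  induction h generalizing d' <;> cases h' <;>
    first | rfl | exact (Atom.not_val ‹_›).elim | (congr 1; solve_by_elim)

/-! ### Confluence through full development -/

open Classical in
noncomputable def devT (t : Term) : Distr :=
  if h : ∃ d, Atom t d then h.choose else .single t

/-- The full development: every pure term that can make an atomic step makes it. -/
noncomputable def dev : Distr → Distr
  | .zero => .zero
  | .single t => devT t
  | .add d e => .add (dev d) (dev e)
  | .smul a d => .smul a (dev d)

theorem Atom.devT_eq {t : Term} {d : Distr} (h : Atom t d) : devT t = d := by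
  have hex : ∃ d, Atom t d := ⟨d, h⟩
  rw [devT, dif_pos hex]
  exact hex.choose_spec.unique h

theorem Cong.dev {d e : Distr} (h : Cong d e) : Cong (LinAlg.dev d) (LinAlg.dev e) :=
  h.map rfl (fun _ _ => rfl) (fun _ _ => rfl)

theorem eval_dev (d : Distr) : Eval d (dev d) := by
  induction d using Distr.ind with
  | hz => exact .refl
  | hs t =>
    by_cases h : ∃ e, Atom t e
    · obtain ⟨e, he⟩ := h
      exact .single (by rw [dev, he.devT_eq]; exact .of_atom he)
    · rw [dev, devT, dif_neg h]
      exact .refl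
  | ha d e ihd ihe => exact ihd.add ihe
  | hm a d ih => exact ih.smul a

def EvalCong (u v : Distr) : Prop := ∃ v₀, Eval u v₀ ∧ Cong v₀ v

namespace EvalCong

theorem of_eval {u v : Distr} (h : Eval u v) : EvalCong u v := ⟨v, h, .refl v⟩

theorem of_cong {u v : Distr} (h : Cong u v) : EvalCong u v := ⟨u, .refl, h⟩

theorem trans {u v w : Distr} (h₁ : EvalCong u v) (h₂ : EvalCong v w) : EvalCong u w := by
  obtain ⟨v₀, he₁, hc₁⟩ := h₁
  obtain ⟨w₀, he₂, hc₂⟩ := h₂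
  obtain ⟨w₁, he₃, hc₃⟩ := Eval.exists_of_cong hc₁ he₂
  exact ⟨w₁, he₁.trans he₃, hc₃.trans hc₂⟩

end EvalCong

theorem dev_add_smul_single (a : ℂ) {s : Term} {s' : Distr} (r : Distr) (h : Atom s s') :
    dev (Distr.add (.smul a (.single s)) r) = Distr.add (.smul a s') (dev r) := by
  rw [dev, dev, dev, h.devT_eq]

/-! The two halves of the Z-property of `dev` with respect to `Step`. -/

theorem Step.evalCong_dev {d e : Distr} (h : Step d e) : EvalCong e (dev d) := by
  obtain ⟨a, s, s', r, h₁, h₂, hA⟩ := h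
  have hd : Cong (dev d) (Distr.add (.smul a s') (dev r)) := by
    simpa only [dev_add_smul_single a r hA] using h₁.dev
  exact (EvalCong.of_cong h₂).trans
    ((EvalCong.of_eval (Eval.add .refl (eval_dev r))).trans (.of_cong hd.symm))

theorem Step.evalCong_dev_dev {d e : Distr} (h : Step d e) : EvalCong (dev d) (dev e) := by
  obtain ⟨a, s, s', r, h₁, h₂, hA⟩ := h
  have hd : Cong (dev d) (Distr.add (.smul a s') (dev r)) := by
    simpa only [dev_add_smul_single a r hA] using h₁.dev
  exact (EvalCong.of_cong hd).trans
    ((EvalCong.of_eval (((eval_dev s').smul a).add .refl)).trans (.of_cong h₂.dev.symm))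

theorem EvalCong.dev {d e : Distr} (h : EvalCong d e) : EvalCong (LinAlg.dev d) (LinAlg.dev e) := by
  obtain ⟨e₀, he, hc⟩ := h
  refine EvalCong.trans ?_ (.of_cong hc.dev)
  clear hc
  induction he with
  | refl => exact .of_cong (.refl _)
  | tail _ hst ih => exact ih.trans hst.evalCong_dev_dev

/-- `ZStep d e`: `e` lies between `d` and its full development; this relation has the diamond
property, witnessed by `dev d`. -/
def ZStep (d e : Distr) : Prop := EvalCong d e ∧ EvalCong e (dev d)

theorem Eval.reflTransGen_zStep {d e : Distr} (h : Eval d e) : Relation.ReflTransGen ZStep d e :=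
  h.lift id fun _ _ h => ⟨.of_eval (.single h), h.evalCong_dev⟩

theorem EvalCong.of_reflTransGen_zStep {d e : Distr} (h : Relation.ReflTransGen ZStep d e) :
    EvalCong d e := by
  induction h with
  | refl => exact .of_cong (.refl _)
  | tail _ hst ih => exact ih.trans hst.1

theorem Eval.join {d e₁ e₂ : Distr} (h₁ : Eval d e₁) (h₂ : Eval d e₂) :
    ∃ u, EvalCong e₁ u ∧ EvalCong e₂ u := by
  have diamond (d e₁ e₂ : Distr) (h₁ : ZStep d e₁) (h₂ : ZStep d e₂) :
      ∃ u, Relation.ReflGen ZStep e₁ u ∧ Relation.ReflTransGen ZStep e₂ u :=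
    ⟨dev d, .single ⟨h₁.2, h₁.1.dev⟩, .single ⟨h₂.2, h₂.1.dev⟩⟩
  obtain ⟨u, hu₁, hu₂⟩ :=
    Relation.church_rosser diamond h₁.reflTransGen_zStep h₂.reflTransGen_zStep
  exact ⟨u, .of_reflTransGen_zStep hu₁, .of_reflTransGen_zStep hu₂⟩

def NormalD (d : Distr) : Prop := ∀ e, ¬ Step d e

theorem Eval.eq_of_normal {d e : Distr} (hn : NormalD d) (h : Eval d e) : e = d := by
  rcases h.cases_head with rfl | ⟨c, hs, _⟩
  · rfl
  · exact (hn c hs).elim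

theorem Eval.exists_cong_of_normal {d w m : Distr} (hw : Eval d w) (hm : Eval d m)
    (hn : NormalD w) : ∃ u, Eval m u ∧ Cong u w := by
  obtain ⟨u, ⟨w₀, hw₀, hcw⟩, ⟨u₀, hu₀, hcu⟩⟩ := hw.join hm
  rw [hw₀.eq_of_normal hn] at hcw
  exact ⟨u₀, hu₀, hcu.trans hcw.symm⟩

theorem Eval.cong_of_normal {d w₁ w₂ : Distr} (h₁ : Eval d w₁) (h₂ : Eval d w₂)
    (hn₁ : NormalD w₁) (hn₂ : NormalD w₂) : Cong w₂ w₁ := by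
  obtain ⟨u, hu, hc⟩ := h₁.exists_cong_of_normal h₂ hn₁
  rwa [hu.eq_of_normal hn₂] at hc

theorem IsValD.isValT_of_mem_domD {d : Distr} (h : IsValD d) {t : Term} (ht : t ∈ domD d) :
    IsValT t := by
  induction d using Distr.ind with
  | hz => simp [domD] at ht
  | hs s => rw [domD, Finset.mem_singleton] at ht; rwa [ht]
  | ha d e ihd ihe =>
    rcases Finset.mem_union.mp ht with ht | ht
    exacts [ihd h.1 ht, ihe h.2 ht]
  | hm a d ih => exact ih h ht

theorem IsValD.normal {w : Distr} (h : IsValD w) : NormalD w := by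
  rintro e ⟨a, s, s', r, hc, -, hA⟩
  have hs : IsValT s := h.isValT_of_mem_domD (by rw [hc.domD_eq]; simp [domD])
  cases s with
  | val v => exact hA.not_val
  | _ => exact hs

/-! ### Boolean distributions -/

theorem isValD_of_forall_mem_domD {d : Distr} (h : ∀ t ∈ domD d, IsValT t) : IsValD d := by
  induction d using Distr.ind with
  | hz => trivial
  | hs t => exact h t (Finset.mem_singleton_self t)
  | ha d e ihd ihe =>
    exact ⟨ihd fun t ht => h t (Finset.mem_union_left _ ht),
      ihe fun t ht => h t (Finset.mem_union_right _ ht)⟩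
  | hm a d ih => exact ih h

theorem fvD_eq_empty_of_forall_mem_domD {d : Distr} (h : ∀ t ∈ domD d, fvT t = ∅) :
    fvD d = ∅ := by
  induction d using Distr.ind with
  | hz => rfl
  | hs t => exact h t (Finset.mem_singleton_self t)
  | ha d e ihd ihe =>
    rw [fvD, ihd fun t ht => h t (Finset.mem_union_left _ ht),
      ihe fun t ht => h t (Finset.mem_union_right _ ht), Finset.empty_union]
  | hm a d ih => exact ih h

theorem mem_BoolT {d : Distr} : d ∈ BoolT ↔ d = ttD ∨ d = ffD := by
  constructor
  · rintro (⟨v, rfl, rfl⟩ | ⟨w, rfl, rfl⟩)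
    exacts [.inl rfl, .inr rfl]
  · rintro (rfl | rfl)
    exacts [.inl ⟨_, rfl, rfl⟩, .inr ⟨_, rfl, rfl⟩]

theorem ttD_mem_BoolT : ttD ∈ BoolT := mem_BoolT.mpr (.inl rfl)

theorem ffD_mem_BoolT : ffD ∈ BoolT := mem_BoolT.mpr (.inr rfl)

namespace Span

theorem domD_subset {v : Distr} (h : Span BoolT v) :
    domD v ⊆ {Term.val (.inl .star), Term.val (.inr .star)} := by
  induction h with
  | mem hd => rcases mem_BoolT.mp hd with rfl | rfl <;> simp [ttD, ffD, domD]
  | zero => simp [domD]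
  | add _ _ ih₁ ih₂ => exact Finset.union_subset ih₁ ih₂
  | smul a _ ih => exact ih
  | congr _ hc ih => rwa [hc.domD_eq] at ih

theorem isValD {v : Distr} (h : Span BoolT v) : IsValD v :=
  isValD_of_forall_mem_domD fun t ht => by
    rcases Finset.mem_insert.mp (h.domD_subset ht) with rfl | ht
    · trivial
    · rw [Finset.mem_singleton.mp ht]; trivial

theorem fvD_eq_empty {v : Distr} (h : Span BoolT v) : fvD v = ∅ :=
  fvD_eq_empty_of_forall_mem_domD fun t ht => by
    rcases Finset.mem_insert.mp (h.domD_subset ht) with rfl | ht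
    · rfl
    · rw [Finset.mem_singleton.mp ht]; rfl

end Span

theorem piB_ttD : piB ttD = (1, 0) := by simp [piB, coeff, ttD]

theorem piB_ffD : piB ffD = (0, 1) := by simp [piB, coeff, ffD]

theorem piB_zero : piB .zero = 0 := by simp [piB, coeff, Prod.ext_iff]

theorem piB_add (d e : Distr) : piB (d.add e) = piB d + piB e := by simp [piB, coeff]

theorem piB_smul (a : ℂ) (d : Distr) : piB (.smul a d) = a • piB d := by simp [piB, coeff]

theorem hinner_self (u : ℂ × ℂ) :
    hinner u u = ((Complex.normSq u.1 + Complex.normSq u.2 : ℝ) : ℂ) := by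
  simp only [hinner, Complex.ofReal_add, Complex.normSq_eq_conj_mul_self]

theorem innerD_eq_hinner {v w : Distr}
    (h : domD v ⊆ {Term.val (.inl .star), Term.val (.inr .star)}) :
    innerD v w = hinner (piB v) (piB w) := by
  rw [innerD, Finset.sum_subset h fun t _ ht => by rw [coeff_eq_zero_of_notMem_domD ht,
    map_zero, zero_mul], Finset.sum_pair (by simp)]
  rfl

theorem mem_sharpBool_iff {v : Distr} :
    v ∈ sharpBool ↔ Span BoolT v ∧ hinner (piB v) (piB v) = 1 := by
  refine and_congr_right fun hv => ?_
  have hnorm : normD v = √(Complex.normSq (piB v).1 + Complex.normSq (piB v).2) := by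
    rw [normD, innerD_eq_hinner hv.domD_subset, hinner_self, Complex.ofReal_re]
  rw [hinner_self, Complex.ofReal_eq_one, ← Real.sqrt_eq_one, ← hnorm]
  exact ⟨fun h => h.2, fun h => ⟨⟨hv.isValD, hv.fvD_eq_empty⟩, h⟩⟩

theorem Cong.mem_sharpBool {d e : Distr} (h : Cong d e) (hd : d ∈ sharpBool) : e ∈ sharpBool := by
  rw [mem_sharpBool_iff, ← h.piB_eq] at *
  exact ⟨hd.1.congr h, hd.2⟩

/-! ### Operators on `ℂ²` -/

noncomputable def opOfColumns (A B : ℂ × ℂ) : ℂ × ℂ →ₗ[ℂ] ℂ × ℂ :=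
  (LinearMap.toSpanSingleton ℂ _ A).coprod (LinearMap.toSpanSingleton ℂ _ B)

theorem opOfColumns_apply (A B p : ℂ × ℂ) : opOfColumns A B p = p.1 • A + p.2 • B := by
  simp [opOfColumns]

theorem hinner_opOfColumns (A B u v : ℂ × ℂ) :
    hinner (opOfColumns A B u) (opOfColumns A B v) =
      (starRingEnd ℂ) u.1 * v.1 * hinner A A + (starRingEnd ℂ) u.1 * v.2 * hinner A B +
      (starRingEnd ℂ) u.2 * v.1 * hinner B A + (starRingEnd ℂ) u.2 * v.2 * hinner B B := by
  simp only [opOfColumns_apply, hinner, Prod.fst_add, Prod.snd_add, Prod.smul_fst,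
    Prod.smul_snd, smul_eq_mul, map_add, map_mul]
  ring

theorem isUnitaryOp_opOfColumns {A B : ℂ × ℂ}
    (h : ∀ p, hinner p p = 1 → hinner (opOfColumns A B p) (opOfColumns A B p) = 1) :
    IsUnitaryOp (opOfColumns A B) := by
  have test (p : ℂ × ℂ) (hp : Complex.normSq p.1 + Complex.normSq p.2 = 1) :=
    (hinner_opOfColumns A B p p).symm.trans (h p (by rw [hinner_self, hp, Complex.ofReal_one]))
  set r : ℂ := (((√2)⁻¹ : ℝ) : ℂ)
  have hr : Complex.normSq r = 2⁻¹ := by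
    rw [Complex.normSq_ofReal, ← mul_inv, Real.mul_self_sqrt zero_le_two]
  have hrr : (starRingEnd ℂ) r * r = 2⁻¹ := by
    rw [← Complex.normSq_eq_conj_mul_self, hr, Complex.ofReal_inv, Complex.ofReal_ofNat]
  have hAA := test (1, 0) (by simp)
  have hBB := test (0, 1) (by simp)
  have hsum := test (r, r) (by simp only [hr]; norm_num)
  have hdiff := test (r, r * Complex.I) (by simp only [Complex.normSq_mul, hr]; norm_num)
  simp only [map_one, map_zero, one_mul, mul_one, zero_mul, mul_zero, add_zero,
    zero_add] at hAA hBB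
  simp only [map_mul, Complex.conj_I, hAA, hBB] at hsum hdiff
  have hplus : hinner A B + hinner B A = 0 := by
    linear_combination 2 * hsum - 2 * (2 + hinner A B + hinner B A) * hrr
  have hminus : Complex.I * (hinner A B - hinner B A) = 0 := by
    linear_combination 2 * hdiff
      - 2 * (2 + Complex.I * hinner A B - Complex.I * hinner B A) * hrr
      + 2 * ((starRingEnd ℂ) r * r) * Complex.I_sq
  have hminus' := (mul_eq_zero.mp hminus).resolve_left Complex.I_ne_zero
  have hAB : hinner A B = 0 := by linear_combination (hplus + hminus') / 2
  have hBA : hinner B A = 0 := by linear_combination (hplus - hminus') / 2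
  intro u v
  rw [hinner_opOfColumns, hAA, hAB, hBA, hBB, hinner]
  ring

/-! ### Values of type `♯𝔹 → ♯𝔹` -/

theorem eval_appTD_lam {v : Distr} (hv : IsValD v) (x : ℕ) (b : Distr) :
    Eval (appTD (.val (.lam x b)) v) (bsubst x b v) := by
  induction v using Distr.ind with
  | hz => exact .refl
  | hs t =>
    cases t with
    | val u => exact .single (.of_atom (.beta x b u))
    | _ => exact hv.elim
  | ha d e ihd ihe => exact (ihd hv.1).add (ihe hv.2)
  | hm a d ih => exact (ih hv).smul a

theorem Span.exists_eval_bsubst {x : ℕ} {b wt wf : Distr}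
    (htt : Eval (bsubst x b ttD) wt) (hff : Eval (bsubst x b ffD) wf)
    (hwt : Span BoolT wt) (hwf : Span BoolT wf) {v : Distr} (hv : Span BoolT v) :
    ∃ w, Span BoolT w ∧ Eval (bsubst x b v) w ∧
      piB w = opOfColumns (piB wt) (piB wf) (piB v) := by
  induction hv with
  | mem hd =>
    rcases mem_BoolT.mp hd with rfl | rfl
    · exact ⟨wt, hwt, htt, by simp [piB_ttD, opOfColumns_apply]⟩
    · exact ⟨wf, hwf, hff, by simp [piB_ffD, opOfColumns_apply]⟩
  | zero => exact ⟨.zero, .zero, .refl, by simp [piB_zero]⟩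
  | add _ _ ih₁ ih₂ =>
    obtain ⟨w₁, hs₁, he₁, hp₁⟩ := ih₁
    obtain ⟨w₂, hs₂, he₂, hp₂⟩ := ih₂
    exact ⟨w₁.add w₂, hs₁.add hs₂, he₁.add he₂, by simp [piB_add, hp₁, hp₂]⟩
  | smul a _ ih =>
    obtain ⟨w, hs, he, hp⟩ := ih
    exact ⟨.smul a w, hs.smul a, he.smul a, by simp [piB_smul, hp]⟩
  | congr _ hc ih =>
    obtain ⟨w, hs, he, hp⟩ := ih
    obtain ⟨w', he', hc'⟩ := Eval.exists_of_cong (hc.symm.bsubst x b) he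
    exact ⟨w', hs.congr hc'.symm, he', by rw [hc'.piB_eq, hp, hc.piB_eq]⟩

theorem exists_isUnitaryOp_represents {x : ℕ} {b : Distr}
    (H : ∀ v ∈ sharpBool, Realizes sharpBool (bsubst x b v)) :
    ∃ F : ℂ × ℂ → ℂ × ℂ, IsUnitaryOp F ∧ Represents (Distr.single (.val (.lam x b))) F := by
  obtain ⟨wt, hwt, htt⟩ := H ttD (mem_sharpBool_iff.mpr ⟨.mem ttD_mem_BoolT,
    by simp [piB_ttD, hinner]⟩)
  obtain ⟨wf, hwf, hff⟩ := H ffD (mem_sharpBool_iff.mpr ⟨.mem ffD_mem_BoolT,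
    by simp [piB_ffD, hinner]⟩)
  have hF (v : Distr) (hv : Span BoolT v) :=
    Span.exists_eval_bsubst htt hff (mem_sharpBool_iff.mp hwt).1 (mem_sharpBool_iff.mp hwf).1 hv
  refine ⟨opOfColumns (piB wt) (piB wf), isUnitaryOp_opOfColumns fun p hp => ?_, fun v hv => ?_⟩
  · let v : Distr := Distr.add (.smul p.1 ttD) (.smul p.2 ffD)
    have hv : Span BoolT v :=
      (Span.mem ttD_mem_BoolT).smul p.1 |>.add <|
        (Span.mem ffD_mem_BoolT).smul p.2
    have hpv : piB v = p := by simp [v, piB_add, piB_smul, piB_ttD, piB_ffD]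
    obtain ⟨u, hu, hue⟩ := H v (mem_sharpBool_iff.mpr ⟨hv, hpv ▸ hp⟩)
    obtain ⟨w, hw, hwe, hwp⟩ := hF v hv
    have hcong := hwe.cong_of_normal hue hw.isValD.normal (mem_sharpBool_iff.mp hu).1.isValD.normal
    rw [← hpv, ← hwp]
    exact (mem_sharpBool_iff.mp (hcong.mem_sharpBool hu)).2
  · obtain ⟨w, hw, hwe, hwp⟩ := hF v hv
    exact ⟨w, hw, (eval_appTD_lam hv.isValD x b).trans hwe, hwp⟩

theorem realizes_bsubst_of_represents {x : ℕ} {b : Distr} {F : ℂ × ℂ → ℂ × ℂ}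
    (hU : IsUnitaryOp F) (hR : Represents (Distr.single (.val (.lam x b))) F) {v : Distr}
    (hv : v ∈ sharpBool) : Realizes sharpBool (bsubst x b v) := by
  rw [mem_sharpBool_iff] at hv
  obtain ⟨w, hw, hwe, hwp⟩ := hR v hv.1
  obtain ⟨u, hue, huw⟩ :=
    hwe.exists_cong_of_normal (eval_appTD_lam hv.1.isValD x b) hw.isValD.normal
  refine ⟨u, huw.symm.mem_sharpBool (mem_sharpBool_iff.mpr ⟨hw, ?_⟩), hue⟩
  rw [hwp, hU, hv.2]

/-- A closed λ-abstraction is a value of type ♯𝔹→♯𝔹 iff it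
represents a unitary operator on ℂ². -/
theorem charac_values_sharpBool_arrow (x : ℕ) (b : Distr)
    (hclosed : fvD (Distr.single (.val (.lam x b))) = ∅) :
    Distr.single (.val (.lam x b)) ∈ arrowT sharpBool sharpBool ↔
      ∃ F : ℂ × ℂ → ℂ × ℂ, IsUnitaryOp F ∧
        Represents (Distr.single (.val (.lam x b))) F := by
  constructor
  · rintro ⟨x', b', heq, -, H⟩
    obtain ⟨rfl, rfl⟩ : x = x' ∧ b = b' := by simpa using heq
    exact exists_isUnitaryOp_represents H
  · rintro ⟨F, hU, hR⟩
    exact ⟨x, b, rfl, hclosed, fun v hv => realizes_bsubst_of_represents hU hR hv⟩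

end LinAlg
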